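/- arXiv:1104.5527 — 7 statements merged into one kernel-verified Lean document; each statement's English description precedes it below -/
import Mathlib

section
/- For all η, η̃ ∈ A and all φ ∈ A: α^η(φ) = exp( (1/2)·{η−η̃, φ−η̃} − (1/4)·g(η−η̃, η−η̃) − (i/2)·θ(η, η−η̃) − (i/2)·θ(η̃, η−η̃) ) · α^{η̃}(φ). -/
/-!
Put `c = η − ηt` and `b = φ − ηt`, so that `φ − η = b − c`. Expanding `θ(η, b − c)` and
`θ(φ, b − c)` through the cocycle relation `θ(ξ + ηt, ·) = θ(ηt, ·) + B(ξ, ·)` leaves, besides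
terms of `α^{ηt}(φ)` and the prefactor, the antisymmetric part `B(c,b) − B(b,c) = Im ⟪c, b⟫`;
expanding `‖b − c‖²` leaves `Re ⟪c, b⟫`. Together they assemble into the holomorphic
term `½ ⟪c, b⟫` of the prefactor.
-/

/-- The wave function `α^η : A → ℂ`,
`α^η(φ) = exp( (i/2)·θ(η, φ−η) + (i/2)·θ(φ, φ−η) − (1/4)·g(φ−η, φ−η) )`,
where `g(x,y) = Re ⟪x,y⟫`. -/
noncomputable def alphaFn {H A : Type*} [NormedAddCommGroup H] [InnerProductSpace ℂ H]
    [AddTorsor H A] (θ : A → H → ℝ) (η φ : A) : ℂ :=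
  Complex.exp ((Complex.I / 2) * ((θ η (φ -ᵥ η) : ℝ) : ℂ)
    + (Complex.I / 2) * ((θ φ (φ -ᵥ η) : ℝ) : ℂ)
    - (1/4 : ℂ) * (((inner ℂ (φ -ᵥ η) (φ -ᵥ η) : ℂ).re : ℝ) : ℂ))

theorem add_apply_vsub_eq_of_cocycle {R V P : Type*} [CommRing R] [AddCommGroup V] [Module R V]
    [AddTorsor V P] (θ : P → V → R) (hθ : ∀ p, IsLinearMap R (θ p)) (B : V → V → R)
    (hθB : ∀ (p : P) (v w : V), θ (v +ᵥ p) w = θ p w + B v w) (p q x : P) :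
    θ p (x -ᵥ p) + θ x (x -ᵥ p) =
      θ q (x -ᵥ q) + θ x (x -ᵥ q) - θ p (p -ᵥ q) - θ q (p -ᵥ q)
        + (B (p -ᵥ q) (x -ᵥ q) - B (x -ᵥ q) (p -ᵥ q)) := by
  have hxp : x -ᵥ p = (x -ᵥ q) - (p -ᵥ q) := (vsub_sub_vsub_cancel_right x p q).symm
  have hθp : ∀ w, θ p w = θ q w + B (p -ᵥ q) w := fun w => by
    rw [← hθB, vsub_vadd]
  have hθx : ∀ w, θ x w = θ q w + B (x -ᵥ q) w := fun w => by
    rw [← hθB, vsub_vadd]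
  rw [hxp, (hθ p).map_sub, (hθ x).map_sub, hθp, hθp, hθx, hθx]
  ring

open RCLike in
theorem re_inner_vsub_self_eq {𝕜 H A : Type*} [RCLike 𝕜] [SeminormedAddCommGroup H]
    [InnerProductSpace 𝕜 H] [AddTorsor H A] (p q x : A) :
    re (inner 𝕜 (x -ᵥ p) (x -ᵥ p)) =
      re (inner 𝕜 (x -ᵥ q) (x -ᵥ q)) - 2 * re (inner 𝕜 (p -ᵥ q) (x -ᵥ q))
        + re (inner 𝕜 (p -ᵥ q) (p -ᵥ q)) := by
  rw [← vsub_sub_vsub_cancel_right x p q, inner_sub_sub_self, map_add, map_sub, map_sub,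
    inner_re_symm (x -ᵥ q) (p -ᵥ q)]
  ring

theorem statement2_general
    {H A : Type*} [NormedAddCommGroup H] [InnerProductSpace ℂ H]
    [AddTorsor H A]
    (θ : A → H → ℝ) (hθ : ∀ η : A, IsLinearMap ℝ (θ η))
    (B : H → H → ℝ)
    (hθB : ∀ (η : A) (ξ ξ' : H), θ (ξ +ᵥ η) ξ' = θ η ξ' + B ξ ξ')
    (hωB : ∀ ξ ξ' : H,
      (1/2 : ℝ) * (inner ℂ ξ ξ' : ℂ).im = (1/2 : ℝ) * (B ξ ξ' - B ξ' ξ)) :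
    ∀ η ηt φ : A,
      alphaFn θ η φ =
        Complex.exp ((1/2 : ℂ) * (inner ℂ (η -ᵥ ηt) (φ -ᵥ ηt) : ℂ)
          - (1/4 : ℂ) * (((inner ℂ (η -ᵥ ηt) (η -ᵥ ηt) : ℂ).re : ℝ) : ℂ)
          - (Complex.I / 2) * ((θ η (η -ᵥ ηt) : ℝ) : ℂ)
          - (Complex.I / 2) * ((θ ηt (η -ᵥ ηt) : ℝ) : ℂ))
        * alphaFn θ ηt φ := by
  intro η ηt φ
  have hθ_sum : ((θ η (φ -ᵥ η) + θ φ (φ -ᵥ η) : ℝ) : ℂ) = _ :=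
    congrArg _ (add_apply_vsub_eq_of_cocycle θ hθ B hθB η ηt φ)
  have h_re : (((inner ℂ (φ -ᵥ η) (φ -ᵥ η) : ℂ).re : ℝ) : ℂ) = _ :=
    congrArg _ (re_inner_vsub_self_eq (𝕜 := ℂ) η ηt φ)
  have h_im : (inner ℂ (η -ᵥ ηt) (φ -ᵥ ηt) : ℂ).im =
      B (η -ᵥ ηt) (φ -ᵥ ηt) - B (φ -ᵥ ηt) (η -ᵥ ηt) :=
    mul_left_cancel₀ (by norm_num) (hωB _ _)
  have h_inner := Complex.re_add_im (inner ℂ (η -ᵥ ηt) (φ -ᵥ ηt) : ℂ)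
  rw [h_im] at h_inner
  push_cast at hθ_sum h_re h_inner
  rw [alphaFn, alphaFn, ← Complex.exp_add]
  congr 1
  linear_combination (Complex.I / 2) * hθ_sum - (1 / 4 : ℂ) * h_re + (1 / 2 : ℂ) * h_inner

/-- For all `η, ηt ∈ A` and all `φ ∈ A`:
`α^η(φ) = exp( (1/2)·{η−ηt, φ−ηt} − (1/4)·g(η−ηt, η−ηt) − (i/2)·θ(η, η−ηt)
− (i/2)·θ(ηt, η−ηt) ) · α^{ηt}(φ)`. -/
theorem statement2
    {H A : Type*} [NormedAddCommGroup H] [InnerProductSpace ℂ H] [CompleteSpace H]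
    [AddTorsor H A]
    (θ : A → H → ℝ) (hθ : ∀ η : A, IsLinearMap ℝ (θ η))
    (B : H → H → ℝ)
    (hB₁ : ∀ y : H, IsLinearMap ℝ (fun x => B x y))
    (hB₂ : ∀ x : H, IsLinearMap ℝ (B x))
    (hθB : ∀ (η : A) (ξ ξ' : H), θ (ξ +ᵥ η) ξ' = θ η ξ' + B ξ ξ')
    (hωB : ∀ ξ ξ' : H,
      (1/2 : ℝ) * (inner ℂ ξ ξ' : ℂ).im = (1/2 : ℝ) * (B ξ ξ' - B ξ' ξ)) :
    ∀ η ηt φ : A,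
      alphaFn θ η φ =
        Complex.exp ((1/2 : ℂ) * (inner ℂ (η -ᵥ ηt) (φ -ᵥ ηt) : ℂ)
          - (1/4 : ℂ) * (((inner ℂ (η -ᵥ ηt) (η -ᵥ ηt) : ℂ).re : ℝ) : ℂ)
          - (Complex.I / 2) * ((θ η (η -ᵥ ηt) : ℝ) : ℂ)
          - (Complex.I / 2) * ((θ ηt (η -ᵥ ηt) : ℝ) : ℂ))
        * alphaFn θ ηt φ :=
  statement2_general θ hθ B hθB hωB
end

section
/- Let η, η̃ ∈ A and let χ : H → ℂ be a function. Define χ̃ : H → ℂ by χ̃(ξ) := χ(ξ + η̃ − η) · exp( (1/2)·{η−η̃, ξ} − (1/4)·g(η−η̃, η−η̃) − (i/2)·θ(η, η−η̃) − (i/2)·θ(η̃, η−η̃) ). Then: (a) χ̃(φ−η̃)·α^{η̃}(φ) = χ(φ−η)·α^{η}(φ) for every φ ∈ A; and (b) if χ is holomorphic on H (complex Fréchet differentiable at every point), then so is χ̃. -/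
/-- The transformed wave function
`χ̃(ξ) := χ(ξ + η̃ − η) · exp( (1/2)·{η−η̃, ξ} − (1/4)·g(η−η̃, η−η̃)
− (i/2)·θ(η, η−η̃) − (i/2)·θ(η̃, η−η̃) )`. -/
noncomputable def chiTilde {H A : Type*} [NormedAddCommGroup H] [InnerProductSpace ℂ H]
    [AddTorsor H A] (θ : A → H → ℝ) (η ηt : A) (χ : H → ℂ) (ξ : H) : ℂ :=
  χ (ξ + (ηt -ᵥ η)) *
    Complex.exp ((1/2 : ℂ) * (inner ℂ (η -ᵥ ηt) ξ : ℂ)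
      - (1/4 : ℂ) * (((inner ℂ (η -ᵥ ηt) (η -ᵥ ηt) : ℂ).re : ℝ) : ℂ)
      - (Complex.I / 2) * ((θ η (η -ᵥ ηt) : ℝ) : ℂ)
      - (Complex.I / 2) * ((θ ηt (η -ᵥ ηt) : ℝ) : ℂ))


/-!
Write `b = φ − η̃` and `d = η − η̃`, so that `φ − η = b − d`. Comparing exponents, the real parts
agree by expanding `g(b − d, b − d)`, and the imaginary parts agree because the cocycle relation
turns `θ(η, b) − θ(φ, d)` into `θ(η̃, b) − θ(η̃, d) + B(d, b) − B(b, d)`, and `B(d, b) − B(b, d)` is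
`Im ⟪d, b⟫` by the hypothesis relating `B` to `ω`. Holomorphy of `χ̃` is clear: it is `χ` composed
with a translation times the exponential of a complex-affine function.
-/

open Complex

section

variable {H A : Type*} [NormedAddCommGroup H] [InnerProductSpace ℂ H] [AddTorsor H A]
  {θ : A → H → ℝ} {B : H → H → ℝ}

theorem theta_vsub_add_theta_vsub (hθ : ∀ η : A, IsLinearMap ℝ (θ η))
    (hθB : ∀ (η : A) (ξ ξ' : H), θ (ξ +ᵥ η) ξ' = θ η ξ' + B ξ ξ')
    (hB : ∀ ξ ξ' : H, (inner ℂ ξ ξ').im = B ξ ξ' - B ξ' ξ) (η ηt φ : A) :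
    θ η (φ -ᵥ η) + θ φ (φ -ᵥ η)
      = θ ηt (φ -ᵥ ηt) + θ φ (φ -ᵥ ηt) - θ η (η -ᵥ ηt) - θ ηt (η -ᵥ ηt)
        + (inner ℂ (η -ᵥ ηt) (φ -ᵥ ηt)).im := by
  have hsub : φ -ᵥ η = (φ -ᵥ ηt) - (η -ᵥ ηt) := (vsub_sub_vsub_cancel_right φ η ηt).symm
  have hη : θ η (φ -ᵥ ηt) = θ ηt (φ -ᵥ ηt) + B (η -ᵥ ηt) (φ -ᵥ ηt) := by
    rw [← hθB, vsub_vadd]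
  have hφ : θ φ (η -ᵥ ηt) = θ ηt (η -ᵥ ηt) + B (φ -ᵥ ηt) (η -ᵥ ηt) := by
    rw [← hθB, vsub_vadd]
  have hθsub (ψ : A) (x y : H) : θ ψ (x - y) = θ ψ x - θ ψ y := (hθ ψ).mk'.map_sub x y
  rw [hsub, hθsub, hθsub, hB]
  linarith

theorem re_inner_vsub_self (η ηt φ : A) :
    (inner ℂ (φ -ᵥ η) (φ -ᵥ η)).re
      = (inner ℂ (φ -ᵥ ηt) (φ -ᵥ ηt)).re - 2 * (inner ℂ (η -ᵥ ηt) (φ -ᵥ ηt)).re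
        + (inner ℂ (η -ᵥ ηt) (η -ᵥ ηt)).re := by
  rw [← vsub_sub_vsub_cancel_right φ η ηt, inner_sub_sub_self]
  have hsymm := inner_re_symm (𝕜 := ℂ) (φ -ᵥ ηt) (η -ᵥ ηt)
  simp only [RCLike.re_to_complex] at hsymm
  simp only [sub_re, add_re, hsymm]
  ring

theorem chiTilde_vsub_mul_alphaFn (hθ : ∀ η : A, IsLinearMap ℝ (θ η))
    (hθB : ∀ (η : A) (ξ ξ' : H), θ (ξ +ᵥ η) ξ' = θ η ξ' + B ξ ξ')
    (hB : ∀ ξ ξ' : H, (inner ℂ ξ ξ').im = B ξ ξ' - B ξ' ξ) (η ηt φ : A) (χ : H → ℂ) :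
    chiTilde θ η ηt χ (φ -ᵥ ηt) * alphaFn θ ηt φ = χ (φ -ᵥ η) * alphaFn θ η φ := by
  unfold chiTilde alphaFn
  rw [vsub_add_vsub_cancel, mul_assoc, ← exp_add]
  congr 2
  have hphase := congrArg ((↑) : ℝ → ℂ) (theta_vsub_add_theta_vsub hθ hθB hB η ηt φ)
  have hnorm := congrArg ((↑) : ℝ → ℂ) (re_inner_vsub_self (H := H) η ηt φ)
  push_cast at hphase hnorm
  rw [← re_add_im (inner ℂ (η -ᵥ ηt) (φ -ᵥ ηt))]
  linear_combination -(I / 2) * hphase + (1 / 4 : ℂ) * hnorm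

theorem differentiable_chiTilde (θ : A → H → ℝ) (η ηt : A) {χ : H → ℂ}
    (hχ : Differentiable ℂ χ) : Differentiable ℂ (chiTilde θ η ηt χ) := by
  unfold chiTilde
  have hinner : Differentiable ℂ (fun ξ : H => inner ℂ (η -ᵥ ηt) ξ) :=
    (innerSL ℂ (η -ᵥ ηt)).differentiable
  exact (hχ.comp (differentiable_id.add_const _)).mul (by fun_prop)

end

theorem statement3_general
    {H A : Type*} [NormedAddCommGroup H] [InnerProductSpace ℂ H]
    [AddTorsor H A]
    (θ : A → H → ℝ) (hθ : ∀ η : A, IsLinearMap ℝ (θ η))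
    (B : H → H → ℝ)
    (hθB : ∀ (η : A) (ξ ξ' : H), θ (ξ +ᵥ η) ξ' = θ η ξ' + B ξ ξ')
    (hωB : ∀ ξ ξ' : H,
      (1/2 : ℝ) * (inner ℂ ξ ξ' : ℂ).im = (1/2 : ℝ) * (B ξ ξ' - B ξ' ξ))
    (η ηt : A) (χ : H → ℂ) :
    (∀ φ : A, chiTilde θ η ηt χ (φ -ᵥ ηt) * alphaFn θ ηt φ
        = χ (φ -ᵥ η) * alphaFn θ η φ) ∧
    (Differentiable ℂ χ → Differentiable ℂ (chiTilde θ η ηt χ)) :=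
  have hB : ∀ ξ ξ' : H, (inner ℂ ξ ξ').im = B ξ ξ' - B ξ' ξ := fun ξ ξ' => by
    linarith [hωB ξ ξ']
  ⟨fun φ => chiTilde_vsub_mul_alphaFn hθ hθB hB η ηt φ χ, differentiable_chiTilde θ η ηt⟩

/-- Let `η, η̃ ∈ A` and `χ : H → ℂ`.  Then
(a) `χ̃(φ−η̃)·α^{η̃}(φ) = χ(φ−η)·α^{η}(φ)` for all `φ ∈ A`; and
(b) if `χ` is holomorphic on `H`, then so is `χ̃`. -/
theorem statement3
    {H A : Type*} [NormedAddCommGroup H] [InnerProductSpace ℂ H] [CompleteSpace H]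
    [AddTorsor H A]
    (θ : A → H → ℝ) (hθ : ∀ η : A, IsLinearMap ℝ (θ η))
    (B : H → H → ℝ)
    (hB₁ : ∀ y : H, IsLinearMap ℝ (fun x => B x y))
    (hB₂ : ∀ x : H, IsLinearMap ℝ (B x))
    (hθB : ∀ (η : A) (ξ ξ' : H), θ (ξ +ᵥ η) ξ' = θ η ξ' + B ξ ξ')
    (hωB : ∀ ξ ξ' : H,
      (1/2 : ℝ) * (inner ℂ ξ ξ' : ℂ).im = (1/2 : ℝ) * (B ξ ξ' - B ξ' ξ))
    (η ηt : A) (χ : H → ℂ) :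
    (∀ φ : A, chiTilde θ η ηt χ (φ -ᵥ ηt) * alphaFn θ ηt φ
        = χ (φ -ᵥ η) * alphaFn θ η φ) ∧
    (Differentiable ℂ χ → Differentiable ℂ (chiTilde θ η ηt χ)) :=
  statement3_general θ hθ B hθB hωB η ηt χ
end

section
/- For every η ∈ Ã and every ζ ∈ A: exp( i·S(η) − i·θ(η, ζ−η) − (i/2)·B(ζ−η, ζ−η) − (1/2)·g((ζ−η)^I, (ζ−η)^I) − (i/2)·g((ζ−η)^R, (ζ−η)^I) ) = exp( i·S(ζ^R) − i·θ(ζ^R, J·ζ^I) − (i/2)·B(J·ζ^I, J·ζ^I) − (1/2)·g(ζ^I, ζ^I) ). In particular the left-hand side is independent of the choice of η ∈ Ã. -/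
/-!
Since `V` is isotropic for `ω = ½ Im ⟪·,·⟫` and `Im ⟪J v, v⟫ = -‖v‖²`, we get `V ∩ J V = 0`, so the
two decompositions of `ζ` agree: `ζ^R = (ζ - η)^R +ᵥ η` and `ζ^I = (ζ - η)^I`. The relation defining
`S` together with `θ(ξ +ᵥ η, ·) = θ(η, ·) + B(ξ, ·)` expands `S(ζ^R)` to second order around `η`, and
after expanding `θ` and `B` bilinearly the two exponents differ by
`ω((ζ-η)^R, J (ζ-η)^I) - ½ g((ζ-η)^R, (ζ-η)^I)`, which vanishes because `Im ⟪x, i y⟫ = Re ⟪x, y⟫`.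
-/

open Complex

section Isotropic

variable {H : Type*} [NormedAddCommGroup H] [InnerProductSpace ℂ H]

theorem im_inner_I_smul_right (x y : H) : (inner ℂ x (I • y)).im = (inner ℂ x y).re := by
  simp [mul_im]

theorem eq_zero_of_mem_of_I_smul_mem {V : Submodule ℝ H}
    (hV : ∀ x ∈ V, ∀ v ∈ V, (inner ℂ x v).im = 0) {v : H} (hv : v ∈ V) (hIv : I • v ∈ V) :
    v = 0 := by
  have h := hV _ hIv _ hv
  rw [inner_smul_left, conj_I, inner_self_eq_norm_sq_to_K] at h
  simpa [← ofReal_pow] using h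

theorem eq_and_eq_of_add_I_smul_eq {V : Submodule ℝ H}
    (hV : ∀ x ∈ V, ∀ v ∈ V, (inner ℂ x v).im = 0) {a b c d : H}
    (ha : a ∈ V) (hb : b ∈ V) (hc : c ∈ V) (hd : d ∈ V) (h : a + I • b = c + I • d) :
    a = c ∧ b = d := by
  have hIbd : I • (b - d) = c - a := by
    rw [smul_sub, sub_eq_sub_iff_add_eq_add, add_comm, h, add_comm]
  have hbd : b - d = 0 :=
    eq_zero_of_mem_of_I_smul_mem hV (V.sub_mem hb hd) (hIbd ▸ V.sub_mem hc ha)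
  rw [hbd, smul_zero, eq_comm, sub_eq_zero] at hIbd
  exact ⟨hIbd.symm, sub_eq_zero.mp hbd⟩

end Isotropic

section Phase

variable {H A : Type*} [NormedAddCommGroup H] [InnerProductSpace ℂ H] [AddTorsor H A]
  {θ : A → H → ℝ} {B : H → H → ℝ}

theorem phase_eq (hθ : ∀ η : A, IsLinearMap ℝ (θ η))
    (hB₁ : ∀ y : H, IsLinearMap ℝ (fun x => B x y)) (hB₂ : ∀ x : H, IsLinearMap ℝ (B x))
    (hθB : ∀ (η : A) (ξ ξ' : H), θ (ξ +ᵥ η) ξ' = θ η ξ' + B ξ ξ')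
    (hωB : ∀ ξ ξ' : H, (1/2 : ℝ) * (inner ℂ ξ ξ').im = (1/2 : ℝ) * (B ξ ξ' - B ξ' ξ))
    {S : A → ℝ} {η : A} {xR xI : H}
    (hS : S (xR +ᵥ η) = S η - (1/2 : ℝ) * θ (xR +ᵥ η) xR - (1/2 : ℝ) * θ η xR) :
    S η - θ η (xR + I • xI) - (1/2 : ℝ) * B (xR + I • xI) (xR + I • xI)
        - (1/2 : ℝ) * (inner ℂ xR xI).re
      = S (xR +ᵥ η) - θ (xR +ᵥ η) (I • xI) - (1/2 : ℝ) * B (I • xI) (I • xI) := by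
  have hω := hωB xR (I • xI)
  rw [im_inner_I_smul_right] at hω
  rw [hS, hθB, hθB, (hθ η).map_add, (hB₁ _).map_add, (hB₂ _).map_add, (hB₂ _).map_add]
  linarith

end Phase

theorem statement5_general
    {H A : Type*} [NormedAddCommGroup H] [InnerProductSpace ℂ H]
    [AddTorsor H A]
    (θ : A → H → ℝ) (hθ : ∀ η : A, IsLinearMap ℝ (θ η))
    (B : H → H → ℝ)
    (hB₁ : ∀ y : H, IsLinearMap ℝ (fun x => B x y))
    (hB₂ : ∀ x : H, IsLinearMap ℝ (B x))
    (hθB : ∀ (η : A) (ξ ξ' : H), θ (ξ +ᵥ η) ξ' = θ η ξ' + B ξ ξ')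
    (hωB : ∀ ξ ξ' : H,
      (1/2 : ℝ) * (inner ℂ ξ ξ' : ℂ).im = (1/2 : ℝ) * (B ξ ξ' - B ξ' ξ))
    (V : Submodule ℝ H)
    (hVlag : ∀ x : H, x ∈ V ↔ ∀ v ∈ V, (1/2 : ℝ) * (inner ℂ x v : ℂ).im = 0)
    (η₀ : A)
    (S : A → ℝ)
    (hS : ∀ η η' : A, (∃ v ∈ V, η = v +ᵥ η₀) → (∃ v ∈ V, η' = v +ᵥ η₀) →
      S η = S η' - (1/2 : ℝ) * θ η (η -ᵥ η') - (1/2 : ℝ) * θ η' (η -ᵥ η'))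
    (η : A) (hη : ∃ v ∈ V, η = v +ᵥ η₀)
    (ζ : A)
    (xR xI : H) (hxR : xR ∈ V) (hxI : xI ∈ V)
    (hxdec : ζ -ᵥ η = xR + Complex.I • xI)
    (ζR : A) (hζR : ∃ v ∈ V, ζR = v +ᵥ η₀)
    (ζI : H) (hζI : ζI ∈ V)
    (hζdec : ζ = (Complex.I • ζI) +ᵥ ζR) :
    Complex.exp (Complex.I * ((S η : ℝ) : ℂ)
        - Complex.I * ((θ η (ζ -ᵥ η) : ℝ) : ℂ)
        - (Complex.I / 2) * ((B (ζ -ᵥ η) (ζ -ᵥ η) : ℝ) : ℂ)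
        - (1/2 : ℂ) * (((inner ℂ xI xI : ℂ).re : ℝ) : ℂ)
        - (Complex.I / 2) * (((inner ℂ xR xI : ℂ).re : ℝ) : ℂ))
      = Complex.exp (Complex.I * ((S ζR : ℝ) : ℂ)
        - Complex.I * ((θ ζR (Complex.I • ζI) : ℝ) : ℂ)
        - (Complex.I / 2) * ((B (Complex.I • ζI) (Complex.I • ζI) : ℝ) : ℂ)
        - (1/2 : ℂ) * (((inner ℂ ζI ζI : ℂ).re : ℝ) : ℂ)) := by
  have hiso : ∀ x ∈ V, ∀ v ∈ V, (inner ℂ x v).im = 0 := fun x hx v hv => by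
    simpa using (hVlag x).mp hx v hv
  have hvsub : ∀ {p : A}, (∃ v ∈ V, p = v +ᵥ η₀) → p -ᵥ η₀ ∈ V := by
    rintro _ ⟨v, hv, rfl⟩
    simpa using hv
  have hζRη : ζR -ᵥ η ∈ V := by
    rw [← vsub_sub_vsub_cancel_right ζR η η₀]
    exact V.sub_mem (hvsub hζR) (hvsub hη)
  have hdec : ζR -ᵥ η + I • ζI = xR + I • xI := by
    rw [← hxdec, hζdec, vadd_vsub_assoc, add_comm]
  obtain ⟨hR, rfl⟩ := eq_and_eq_of_add_I_smul_eq hiso hζRη hζI hxR hxI hdec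
  obtain rfl : ζR = xR +ᵥ η := (eq_vadd_iff_vsub_eq _ _ _).mpr hR
  have hSζR := hS _ η hζR hη
  rw [vadd_vsub] at hSζR
  have hphase := congrArg ((↑) : ℝ → ℂ) (phase_eq hθ hB₁ hB₂ hθB hωB (xI := ζI) hSζR)
  push_cast at hphase
  rw [hxdec]
  congr 1
  linear_combination I * hphase

/-- With `V ⊆ H` a closed Lagrangian subspace, `Ã := η₀ + V ⊆ A`,
`S` satisfying the affine-action relation on `Ã`, and the unique decompositions
`ζ − η = xR + J·xI` (`xR, xI ∈ V`) and `ζ = ζR + J·ζI` (`ζR ∈ Ã`, `ζI ∈ V`),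
one has, for every `η ∈ Ã` and `ζ ∈ A`,
`exp( i·S(η) − i·θ(η, ζ−η) − (i/2)·B(ζ−η, ζ−η) − (1/2)·g((ζ−η)^I,(ζ−η)^I)
 − (i/2)·g((ζ−η)^R,(ζ−η)^I) )
 = exp( i·S(ζ^R) − i·θ(ζ^R, J·ζ^I) − (i/2)·B(J·ζ^I, J·ζ^I) − (1/2)·g(ζ^I,ζ^I) )`;
in particular the left-hand side is independent of the choice of `η ∈ Ã`. -/
theorem statement5
    {H A : Type*} [NormedAddCommGroup H] [InnerProductSpace ℂ H] [CompleteSpace H]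
    [AddTorsor H A]
    (θ : A → H → ℝ) (hθ : ∀ η : A, IsLinearMap ℝ (θ η))
    (B : H → H → ℝ)
    (hB₁ : ∀ y : H, IsLinearMap ℝ (fun x => B x y))
    (hB₂ : ∀ x : H, IsLinearMap ℝ (B x))
    (hθB : ∀ (η : A) (ξ ξ' : H), θ (ξ +ᵥ η) ξ' = θ η ξ' + B ξ ξ')
    (hωB : ∀ ξ ξ' : H,
      (1/2 : ℝ) * (inner ℂ ξ ξ' : ℂ).im = (1/2 : ℝ) * (B ξ ξ' - B ξ' ξ))
    (V : Submodule ℝ H) (hVclosed : IsClosed (V : Set H))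
    (hVlag : ∀ x : H, x ∈ V ↔ ∀ v ∈ V, (1/2 : ℝ) * (inner ℂ x v : ℂ).im = 0)
    (η₀ : A)
    (S : A → ℝ)
    (hS : ∀ η η' : A, (∃ v ∈ V, η = v +ᵥ η₀) → (∃ v ∈ V, η' = v +ᵥ η₀) →
      S η = S η' - (1/2 : ℝ) * θ η (η -ᵥ η') - (1/2 : ℝ) * θ η' (η -ᵥ η'))
    (η : A) (hη : ∃ v ∈ V, η = v +ᵥ η₀)
    (ζ : A)
    (xR xI : H) (hxR : xR ∈ V) (hxI : xI ∈ V)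
    (hxdec : ζ -ᵥ η = xR + Complex.I • xI)
    (ζR : A) (hζR : ∃ v ∈ V, ζR = v +ᵥ η₀)
    (ζI : H) (hζI : ζI ∈ V)
    (hζdec : ζ = (Complex.I • ζI) +ᵥ ζR) :
    Complex.exp (Complex.I * ((S η : ℝ) : ℂ)
        - Complex.I * ((θ η (ζ -ᵥ η) : ℝ) : ℂ)
        - (Complex.I / 2) * ((B (ζ -ᵥ η) (ζ -ᵥ η) : ℝ) : ℂ)
        - (1/2 : ℂ) * (((inner ℂ xI xI : ℂ).re : ℝ) : ℂ)
        - (Complex.I / 2) * (((inner ℂ xR xI : ℂ).re : ℝ) : ℂ))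
      = Complex.exp (Complex.I * ((S ζR : ℝ) : ℂ)
        - Complex.I * ((θ ζR (Complex.I • ζI) : ℝ) : ℂ)
        - (Complex.I / 2) * ((B (Complex.I • ζI) (Complex.I • ζI) : ℝ) : ℂ)
        - (1/2 : ℂ) * (((inner ℂ ζI ζI : ℂ).re : ℝ) : ℂ)) :=
  statement5_general θ hθ B hB₁ hB₂ hθB hωB V hVlag η₀ S hS η hη ζ xR xI hxR hxI hxdec ζR hζR ζI hζI
    hζdec
end

section
/- Under the stated assumptions, C(ξ) = 2·ω(ξ,η) for every ξ ∈ L and every η ∈ A; in particular the right-hand side is independent of the choice of η ∈ A. -/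
/-- In a real vector space `K` with subspace `L`, affine subset
`A = η₀ + L`, quadratic action `S` (with symmetric bilinear polarization `β`),
linear `C`, `S^μ := S + C`, bilinear `B` and `ω(x,y) := (1/2)(B(x,y) − B(y,x))`,
under assumptions (i)–(v) one has `C(ξ) = 2·ω(ξ,η)` for every `ξ ∈ L` and every
`η ∈ A`; in particular the right-hand side is independent of the choice of
`η ∈ A`. -/
theorem statement9
    {K : Type*} [AddCommGroup K] [Module ℝ K]
    (L : Submodule ℝ K) (η₀ : K)
    (S : K → ℝ)
    (β : K →ₗ[ℝ] K →ₗ[ℝ] ℝ) (hβsymm : ∀ x y : K, β x y = β y x)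
    (hSβ : ∀ x y : K, S (x + y) = S x + S y + β x y)
    (C : K →ₗ[ℝ] ℝ)
    (B : K →ₗ[ℝ] K →ₗ[ℝ] ℝ)
    (hi : ∀ η : K, (∃ ξ ∈ L, η = η₀ + ξ) → ∀ ξ ∈ L,
      S (η + ξ) + C (η + ξ) = (S η + C η) - (1/2 : ℝ) * B ξ ξ - B η ξ)
    (hii : ∀ ξ ∈ L, S ξ = -(1/2 : ℝ) * B ξ ξ)
    (hiii : ∀ ξ ∈ L, ∀ ξ' ∈ L, B ξ ξ' = B ξ' ξ)
    (hiv : ∀ ξ ∈ L, B ξ η₀ = 0)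
    (hv : ∀ ξ ∈ L, β η₀ ξ = 0) :
    ∀ ξ ∈ L, ∀ η : K, (∃ ξ' ∈ L, η = η₀ + ξ') →
      C ξ = 2 * ((1/2 : ℝ) * (B ξ η - B η ξ)) := by
  intro ξ hξ η hη
  obtain ⟨ξ', hξ', rfl⟩ := hη
  -- polarization on L: β ξ' ξ = - B ξ ξ'
  have hpol : β ξ' ξ = - B ξ ξ' := by
    have h1 := hSβ ξ' ξ
    rw [hii ξ' hξ', hii ξ hξ, hii (ξ' + ξ) (L.add_mem hξ' hξ)] at h1
    have hsym := hiii ξ hξ ξ' hξ'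
    simp only [map_add, LinearMap.add_apply] at h1
    linarith
  -- hi applied
  have h2 := hi (η₀ + ξ') ⟨ξ', hξ', rfl⟩ ξ hξ
  rw [hSβ (η₀ + ξ') ξ, hii ξ hξ] at h2
  have hβ : β (η₀ + ξ') ξ = β ξ' ξ := by
    simp [hv ξ hξ]
  have hBη : B ξ (η₀ + ξ') = B ξ ξ' := by
    simp [hiv ξ hξ]
  simp only [map_add, LinearMap.add_apply] at h2 ⊢
  linarith [hpol, hv ξ hξ, hiv ξ hξ, h2]
end

section
/- Under the stated assumptions, S^μ(η) = (1/2)·C(η) − (1/2)·B(η,η) for every η ∈ A. -/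
/-- In a real vector space `K` with subspace `L`, affine subset
`A = η₀ + L`, quadratic action `S` (with symmetric bilinear polarization `β`),
linear `C`, `S^μ := S + C`, and bilinear `B`, under assumptions (i)–(vii) one has
`S^μ(η) = (1/2)·C(η) − (1/2)·B(η,η)` for every `η ∈ A`. -/
theorem statement10
    {K : Type*} [AddCommGroup K] [Module ℝ K]
    (L : Submodule ℝ K) (η₀ : K)
    (S : K → ℝ)
    (β : K →ₗ[ℝ] K →ₗ[ℝ] ℝ) (hβsymm : ∀ x y : K, β x y = β y x)
    (hSβ : ∀ x y : K, S (x + y) = S x + S y + β x y)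
    (C : K →ₗ[ℝ] ℝ)
    (B : K →ₗ[ℝ] K →ₗ[ℝ] ℝ)
    (hi : ∀ η : K, (∃ ξ ∈ L, η = η₀ + ξ) → ∀ ξ ∈ L,
      S (η + ξ) + C (η + ξ) = (S η + C η) - (1/2 : ℝ) * B ξ ξ - B η ξ)
    (hii : ∀ ξ ∈ L, S ξ = -(1/2 : ℝ) * B ξ ξ)
    (hiii : ∀ ξ ∈ L, ∀ ξ' ∈ L, B ξ ξ' = B ξ' ξ)
    (hiv : ∀ ξ ∈ L, B ξ η₀ = 0)
    (hv : ∀ ξ ∈ L, β η₀ ξ = 0)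
    (hvi : B η₀ η₀ = 0)
    (hvii : S η₀ = -(1/2 : ℝ) * C η₀) :
    ∀ η : K, (∃ ξ ∈ L, η = η₀ + ξ) →
      S η + C η = (1/2 : ℝ) * C η - (1/2 : ℝ) * B η η := by
  rintro η ⟨ξ, hξ, rfl⟩
  have key : C ξ = -B η₀ ξ := by
    have h := hi η₀ ⟨0, L.zero_mem, by simp⟩ ξ hξ
    rw [hSβ η₀ ξ, hii ξ hξ, hv ξ hξ] at h
    simp only [map_add] at h
    linarith
  have hS : S (η₀ + ξ) = -(1/2 : ℝ) * C η₀ - (1/2 : ℝ) * B ξ ξ := by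
    rw [hSβ η₀ ξ, hii ξ hξ, hv ξ hξ, hvii]; ring
  have hB : B (η₀ + ξ) (η₀ + ξ) = B η₀ ξ + B ξ ξ := by
    simp [map_add, hvi, hiv ξ hξ]
  rw [hS, hB]
  simp only [map_add]
  linarith
end

section
/- For every η ∈ A₁ and every φ ∈ H₂: exp(i·S(η)) · α₂^{Tη}(φ + Tη) = exp(i·S(T̃⁻¹φ + η)) · α₁^{η}(T̃⁻¹φ + η). -/
/-! Since `θ(ξ + η, ·) = θ(η, ·) + B(ξ, ·)`, the wave function `α^η(ξ + η)` equals
`exp(i (θ(η, ξ) + B(ξ, ξ)/2) − ‖ξ‖²/4)`. The Gaussian factor is preserved by the unitary `T̃`,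
and the relation defining `S`, taken at the pair `(ξ + η, η)`, says exactly that `S` absorbs the
difference of the two phases. -/

open Complex

theorem alphaFn_vadd_self {H A : Type*} [NormedAddCommGroup H] [InnerProductSpace ℂ H]
    [AddTorsor H A] {θ : A → H → ℝ} {B : H → H → ℝ}
    (hθB : ∀ (η : A) (ξ ξ' : H), θ (ξ +ᵥ η) ξ' = θ η ξ' + B ξ ξ') (η : A) (ξ : H) :
    alphaFn θ η (ξ +ᵥ η) = exp (I * (θ η ξ + B ξ ξ / 2 : ℝ) - (‖ξ‖ ^ 2 / 4 : ℝ)) := by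
  rw [alphaFn, vadd_vsub, hθB, ← RCLike.re_eq_complex_re, inner_self_eq_norm_sq]
  congr 1
  push_cast
  ring

theorem add_phase_eq_vadd_add_phase {H₁ A₁ H₂ A₂ : Type*} [AddCommGroup H₁] [AddCommGroup H₂]
    [AddTorsor H₁ A₁] [AddTorsor H₂ A₂]
    {θ₁ : A₁ → H₁ → ℝ} {B₁ : H₁ → H₁ → ℝ} {θ₂ : A₂ → H₂ → ℝ} {B₂ : H₂ → H₂ → ℝ}
    (hθB₁ : ∀ (η : A₁) (ξ ξ' : H₁), θ₁ (ξ +ᵥ η) ξ' = θ₁ η ξ' + B₁ ξ ξ')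
    (hθB₂ : ∀ (η : A₂) (ξ ξ' : H₂), θ₂ (ξ +ᵥ η) ξ' = θ₂ η ξ' + B₂ ξ ξ')
    {T' : H₁ → H₂} {T : A₁ → A₂} (hT : ∀ (η : A₁) (ξ : H₁), T (ξ +ᵥ η) = T' ξ +ᵥ T η)
    {S : A₁ → ℝ}
    (hS : ∀ η η' : A₁,
      S η = S η'
        - (1/2 : ℝ) * (θ₁ η (η -ᵥ η') - θ₂ (T η) (T' (η -ᵥ η')))
        - (1/2 : ℝ) * (θ₁ η' (η -ᵥ η') - θ₂ (T η') (T' (η -ᵥ η'))))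
    (η : A₁) (ξ : H₁) :
    S η + (θ₂ (T η) (T' ξ) + B₂ (T' ξ) (T' ξ) / 2) = S (ξ +ᵥ η) + (θ₁ η ξ + B₁ ξ ξ / 2) := by
  have h := hS (ξ +ᵥ η) η
  rw [vadd_vsub, hT, hθB₁, hθB₂] at h
  linarith

theorem statement13_general
    {H₁ A₁ H₂ A₂ : Type*}
    [NormedAddCommGroup H₁] [InnerProductSpace ℂ H₁]
    [NormedAddCommGroup H₂] [InnerProductSpace ℂ H₂]
    [AddTorsor H₁ A₁] [AddTorsor H₂ A₂]
    (θ₁ : A₁ → H₁ → ℝ)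
    (B₁ : H₁ → H₁ → ℝ)
    (hθB₁ : ∀ (η : A₁) (ξ ξ' : H₁), θ₁ (ξ +ᵥ η) ξ' = θ₁ η ξ' + B₁ ξ ξ')
    (θ₂ : A₂ → H₂ → ℝ)
    (B₂ : H₂ → H₂ → ℝ)
    (hθB₂ : ∀ (η : A₂) (ξ ξ' : H₂), θ₂ (ξ +ᵥ η) ξ' = θ₂ η ξ' + B₂ ξ ξ')
    (T' : H₁ ≃ₗᵢ[ℂ] H₂)
    (T : A₁ → A₂) (hT : ∀ (η : A₁) (ξ : H₁), T (ξ +ᵥ η) = (T' ξ) +ᵥ T η)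
    (S : A₁ → ℝ)
    (hS : ∀ η η' : A₁,
      S η = S η'
        - (1/2 : ℝ) * (θ₁ η (η -ᵥ η') - θ₂ (T η) (T' (η -ᵥ η')))
        - (1/2 : ℝ) * (θ₁ η' (η -ᵥ η') - θ₂ (T η') (T' (η -ᵥ η')))) :
    ∀ (η : A₁) (φ : H₂),
      Complex.exp (Complex.I * ((S η : ℝ) : ℂ)) * alphaFn θ₂ (T η) (φ +ᵥ T η)
        = Complex.exp (Complex.I * ((S ((T'.symm φ) +ᵥ η) : ℝ) : ℂ))
          * alphaFn θ₁ η ((T'.symm φ) +ᵥ η) := by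
  intro η φ
  obtain ⟨ψ, rfl⟩ := T'.surjective φ
  have hS_phase := congrArg ((↑) : ℝ → ℂ) (add_phase_eq_vadd_add_phase hθB₁ hθB₂ hT hS η ψ)
  push_cast at hS_phase
  rw [T'.symm_apply_apply, alphaFn_vadd_self hθB₁, alphaFn_vadd_self hθB₂, T'.norm_map,
    ← exp_add, ← exp_add]
  congr 1
  push_cast
  linear_combination I * hS_phase

/-- For the "evolution" setting with a unitary `T̃ : H₁ → H₂`
intertwined with `T : A₁ → A₂`, and `S` satisfying the corresponding affine-action
relation, one has for every `η ∈ A₁` and `φ ∈ H₂`: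
`exp(i·S(η)) · α₂^{Tη}(φ + Tη) = exp(i·S(T̃⁻¹φ + η)) · α₁^{η}(T̃⁻¹φ + η)`. -/
theorem statement13
    {H₁ A₁ H₂ A₂ : Type*}
    [NormedAddCommGroup H₁] [InnerProductSpace ℂ H₁] [CompleteSpace H₁]
    [NormedAddCommGroup H₂] [InnerProductSpace ℂ H₂] [CompleteSpace H₂]
    [AddTorsor H₁ A₁] [AddTorsor H₂ A₂]
    (θ₁ : A₁ → H₁ → ℝ) (hθ₁ : ∀ η : A₁, IsLinearMap ℝ (θ₁ η))
    (B₁ : H₁ → H₁ → ℝ)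
    (hB₁₁ : ∀ y : H₁, IsLinearMap ℝ (fun x => B₁ x y))
    (hB₁₂ : ∀ x : H₁, IsLinearMap ℝ (B₁ x))
    (hθB₁ : ∀ (η : A₁) (ξ ξ' : H₁), θ₁ (ξ +ᵥ η) ξ' = θ₁ η ξ' + B₁ ξ ξ')
    (hωB₁ : ∀ ξ ξ' : H₁,
      (1/2 : ℝ) * (inner ℂ ξ ξ' : ℂ).im = (1/2 : ℝ) * (B₁ ξ ξ' - B₁ ξ' ξ))
    (θ₂ : A₂ → H₂ → ℝ) (hθ₂ : ∀ η : A₂, IsLinearMap ℝ (θ₂ η))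
    (B₂ : H₂ → H₂ → ℝ)
    (hB₂₁ : ∀ y : H₂, IsLinearMap ℝ (fun x => B₂ x y))
    (hB₂₂ : ∀ x : H₂, IsLinearMap ℝ (B₂ x))
    (hθB₂ : ∀ (η : A₂) (ξ ξ' : H₂), θ₂ (ξ +ᵥ η) ξ' = θ₂ η ξ' + B₂ ξ ξ')
    (hωB₂ : ∀ ξ ξ' : H₂,
      (1/2 : ℝ) * (inner ℂ ξ ξ' : ℂ).im = (1/2 : ℝ) * (B₂ ξ ξ' - B₂ ξ' ξ))
    (T' : H₁ ≃ₗᵢ[ℂ] H₂)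
    (T : A₁ → A₂) (hT : ∀ (η : A₁) (ξ : H₁), T (ξ +ᵥ η) = (T' ξ) +ᵥ T η)
    (S : A₁ → ℝ)
    (hS : ∀ η η' : A₁,
      S η = S η'
        - (1/2 : ℝ) * (θ₁ η (η -ᵥ η') - θ₂ (T η) (T' (η -ᵥ η')))
        - (1/2 : ℝ) * (θ₁ η' (η -ᵥ η') - θ₂ (T η') (T' (η -ᵥ η')))) :
    ∀ (η : A₁) (φ : H₂),
      Complex.exp (Complex.I * ((S η : ℝ) : ℂ)) * alphaFn θ₂ (T η) (φ +ᵥ T η)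
        = Complex.exp (Complex.I * ((S ((T'.symm φ) +ᵥ η) : ℝ) : ℂ))
          * alphaFn θ₁ η ((T'.symm φ) +ᵥ η) :=
  statement13_general θ₁ B₁ hθB₁ θ₂ B₂ hθB₂ T' T hT S hS
end

section
/- Under the stated assumptions, S(η) = S(η') − (1/2)·θ(η, η−η') − (1/2)·θ(η', η−η') for all η, η' ∈ A. -/
/-! Along the segment `t ↦ t • (η -ᵥ η') +ᵥ η'` the derivative of `S` is affine in `t`, since
`θ` changes by the bilinear `B`; so `S` is quadratic there, and its increment from `η'` to `η`
is minus the mean of the endpoint slopes (trapezoidal rule, exact for quadratics). -/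

theorem eq_add_mul_add_mul_sq_of_hasDerivAt {f : ℝ → ℝ} {a b : ℝ}
    (hf : ∀ t, HasDerivAt f (a + b * t) t) (t : ℝ) :
    f t = f 0 + a * t + b / 2 * t ^ 2 := by
  have hg : ∀ s, HasDerivAt (fun s => f s - a * s - b / 2 * s ^ 2) 0 s := fun s => by
    have h := ((hf s).sub ((hasDerivAt_id' s).const_mul a)).sub
      ((hasDerivAt_pow 2 s).const_mul (b / 2))
    exact h.congr_deriv (by push_cast; ring)
  have := is_const_of_deriv_eq_zero (fun s => (hg s).differentiableAt) (fun s => (hg s).deriv) t 0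
  simp only [mul_zero, sub_zero, ne_eq, OfNat.ofNat_ne_zero, not_false_eq_true, zero_pow] at this
  linarith

theorem statement16_general
    {E A : Type*} [AddCommGroup E] [Module ℝ E] [AddTorsor E A]
    (θ : A → E → ℝ)
    (B : E → E → ℝ)
    (hB₁ : ∀ y : E, IsLinearMap ℝ (fun x => B x y))
    (hθB : ∀ (η : A) (ξ ξ' : E), θ (ξ +ᵥ η) ξ' = θ η ξ' + B ξ ξ')
    (S : A → ℝ)
    (hS : ∀ (η : A) (ξ : E) (t : ℝ),
      HasDerivAt (fun s : ℝ => S ((s • ξ) +ᵥ η)) (-(θ ((t • ξ) +ᵥ η) ξ)) t) :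
    ∀ η η' : A,
      S η = S η' - (1/2 : ℝ) * θ η (η -ᵥ η') - (1/2 : ℝ) * θ η' (η -ᵥ η') := by
  intro η η'
  set ξ := η -ᵥ η'
  have hθ_line (t : ℝ) : θ ((t • ξ) +ᵥ η') ξ = θ η' ξ + B ξ ξ * t := by
    rw [hθB, (hB₁ ξ).map_smul, smul_eq_mul, mul_comm]
  have hη : ξ +ᵥ η' = η := vsub_vadd η η'
  have hθ_end : θ η ξ = θ η' ξ + B ξ ξ := by
    simpa [hη] using hθ_line 1
  have hquad := eq_add_mul_add_mul_sq_of_hasDerivAt (f := fun s : ℝ => S ((s • ξ) +ᵥ η'))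
    (a := -θ η' ξ) (b := -B ξ ξ)
    (fun t => by simpa only [hθ_line, neg_add, neg_mul] using hS η' ξ t) 1
  simp only [one_smul, zero_smul, zero_vadd, hη, mul_one, one_pow] at hquad
  rw [hθ_end]
  linarith

/-- Let `A` be an affine space over the real vector space `E`,
`θ : A × E → ℝ` real-linear in its second argument, `B` real-bilinear with
`θ(ξ+η, ξ') = θ(η,ξ') + B(ξ,ξ')`.  If `S : A → ℝ` is such that for every `η ∈ A`
and `ξ ∈ E` the function `t ↦ S(t·ξ + η)` has derivative `−θ(t·ξ + η, ξ)` at every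
`t ∈ ℝ`, then `S(η) = S(η') − (1/2)·θ(η, η−η') − (1/2)·θ(η', η−η')` for all
`η, η' ∈ A`. -/
theorem statement16
    {E A : Type*} [AddCommGroup E] [Module ℝ E] [AddTorsor E A]
    (θ : A → E → ℝ) (hθ : ∀ η : A, IsLinearMap ℝ (θ η))
    (B : E → E → ℝ)
    (hB₁ : ∀ y : E, IsLinearMap ℝ (fun x => B x y))
    (hB₂ : ∀ x : E, IsLinearMap ℝ (B x))
    (hθB : ∀ (η : A) (ξ ξ' : E), θ (ξ +ᵥ η) ξ' = θ η ξ' + B ξ ξ')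
    (S : A → ℝ)
    (hS : ∀ (η : A) (ξ : E) (t : ℝ),
      HasDerivAt (fun s : ℝ => S ((s • ξ) +ᵥ η)) (-(θ ((t • ξ) +ᵥ η) ξ)) t) :
    ∀ η η' : A,
      S η = S η' - (1/2 : ℝ) * θ η (η -ᵥ η') - (1/2 : ℝ) * θ η' (η -ᵥ η') :=
  statement16_general θ B hB₁ hθB S hS
end
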